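/- If the natural entropy distance between two images A and B of size k × m over Z_n (with k, m ≥ 1) vanishes, i.e., ν̂(A, B) = E(A + (−B)) = 0, then A and B are strongly equivalent: there exists a scalar image S with A = S + B. -/

import Mathlib

open Finset Real

/-!
On `[0, 1]` the summand `p log₂ p` of the entropy is nonpositive and vanishes only at `p = 0`
and `p = 1`. Zero entropy therefore forces every gray level of `A - B` to have frequency `0`
or `1`. The level of any pixel has positive frequency, hence frequency `1`, so it is the level
of every pixel: `A - B` is a scalar image.
-/

/-- The fraction of pixels of the image `A` (of size `k × m`, with values in `ZMod n`)
having gray level `x`. -/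
noncomputable def pixelProb (k m n : ℕ) (A : Fin k × Fin m → ZMod n) (x : ZMod n) : ℝ :=
  ((Finset.univ.filter (fun p => A p = x)).card : ℝ) / (k * m)

/-- The entropy of an image `A : Fin k × Fin m → ZMod n`, with the convention
`0 * log₂ 0 = 0` (automatic since `Real.logb` of `0` is multiplied by `0`). -/
noncomputable def entropy (k m n : ℕ) [NeZero n] (A : Fin k × Fin m → ZMod n) : ℝ :=
  -∑ x : ZMod n, pixelProb k m n A x * Real.logb 2 (pixelProb k m n A x)

section Logb

variable {b x : ℝ}

lemma mul_logb_nonpos (hb : 1 < b) (h₀ : 0 ≤ x) (h₁ : x ≤ 1) : x * logb b x ≤ 0 :=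
  mul_nonpos_of_nonneg_of_nonpos h₀ (logb_nonpos hb h₀ h₁)

lemma eq_one_of_mul_logb_eq_zero (hb : 1 < b) (h₀ : 0 < x) (h₁ : x ≤ 1)
    (h : x * logb b x = 0) : x = 1 := by
  by_contra hx
  have hneg : x * logb b x < 0 :=
    mul_neg_of_pos_of_neg h₀ (logb_neg hb h₀ (lt_of_le_of_ne h₁ hx))
  exact hneg.ne h

end Logb

section PixelProb

variable {k m n : ℕ} (A : Fin k × Fin m → ZMod n)

lemma pixelProb_eq_card_div_card (x : ZMod n) :
    pixelProb k m n A x = #{p | A p = x} / Fintype.card (Fin k × Fin m) := by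
  simp [pixelProb, Fintype.card_prod]

lemma pixelProb_nonneg (x : ZMod n) : 0 ≤ pixelProb k m n A x := by
  unfold pixelProb
  positivity

lemma pixelProb_le_one (x : ZMod n) : pixelProb k m n A x ≤ 1 := by
  rw [pixelProb_eq_card_div_card]
  exact div_le_one_of_le₀ (by exact_mod_cast card_le_univ _) (Nat.cast_nonneg _)

lemma pixelProb_apply_pos (p : Fin k × Fin m) : 0 < pixelProb k m n A (A p) := by
  rw [pixelProb_eq_card_div_card]
  have : Nonempty (Fin k × Fin m) := ⟨p⟩
  exact div_pos (by exact_mod_cast card_pos.mpr ⟨p, by simp⟩) (by exact_mod_cast Fintype.card_pos)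

lemma eq_of_pixelProb_eq_one {x : ZMod n} (h : pixelProb k m n A x = 1) (p : Fin k × Fin m) :
    A p = x := by
  have : Nonempty (Fin k × Fin m) := ⟨p⟩
  rw [pixelProb_eq_card_div_card, div_eq_one_iff_eq (by exact_mod_cast Fintype.card_ne_zero)]
    at h
  have hcard : #{p | A p = x} = #(univ : Finset (Fin k × Fin m)) := by exact_mod_cast h
  exact card_filter_eq_iff.mp hcard p (mem_univ p)

lemma pixelProb_mul_logb_eq_zero_of_entropy_eq_zero [NeZero n] (h : entropy k m n A = 0)
    (x : ZMod n) : pixelProb k m n A x * logb 2 (pixelProb k m n A x) = 0 := by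
  have hsum : ∑ x, pixelProb k m n A x * logb 2 (pixelProb k m n A x) = 0 := by
    simpa [entropy] using h
  refine (sum_eq_zero_iff_of_nonpos fun y _ => ?_).mp hsum x (mem_univ x)
  exact mul_logb_nonpos one_lt_two (pixelProb_nonneg A y) (pixelProb_le_one A y)

lemma exists_forall_eq_of_entropy_eq_zero [NeZero n] (h : entropy k m n A = 0) :
    ∃ c, ∀ p, A p = c := by
  rcases isEmpty_or_nonempty (Fin k × Fin m) with _ | ⟨⟨p₀⟩⟩
  · exact ⟨0, fun p => isEmptyElim p⟩
  · refine ⟨A p₀, eq_of_pixelProb_eq_one A ?_⟩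
    exact eq_one_of_mul_logb_eq_zero one_lt_two (pixelProb_apply_pos A p₀)
      (pixelProb_le_one A _) (pixelProb_mul_logb_eq_zero_of_entropy_eq_zero A h _)

end PixelProb

theorem natural_entropy_distance_eq_zero_imp_strong_equiv_general (k m n : ℕ) [NeZero n]
    (A B : Fin k × Fin m → ZMod n)
    (h : entropy k m n (fun p => A p + (-(B p))) = 0) :
    ∃ S : Fin k × Fin m → ZMod n, (∃ c : ZMod n, ∀ p, S p = c) ∧
      A = fun p => S p + B p := by
  obtain ⟨c, hc⟩ := exists_forall_eq_of_entropy_eq_zero _ h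
  refine ⟨fun _ => c, ⟨c, fun _ => rfl⟩, funext fun p => ?_⟩
  exact sub_eq_iff_eq_add.mp ((sub_eq_add_neg _ _).trans (hc p))

/-- If the natural entropy distance `ν̂(A, B) = E(A + (−B))` vanishes, then the
images are strongly equivalent. -/
theorem natural_entropy_distance_eq_zero_imp_strong_equiv (k m n : ℕ) [NeZero n]
    (hk : 0 < k) (hm : 0 < m) (A B : Fin k × Fin m → ZMod n)
    (h : entropy k m n (fun p => A p + (-(B p))) = 0) :
    ∃ S : Fin k × Fin m → ZMod n, (∃ c : ZMod n, ∀ p, S p = c) ∧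
      A = fun p => S p + B p :=
  natural_entropy_distance_eq_zero_imp_strong_equiv_general k m n A B h
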